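/- Let v : [0,∞) → X be continuously differentiable with v(0) = v₀ and v′(τ) = −g(v(τ))·(v(τ) − p) for all τ ≥ 0, set θ(τ) = exp(−∫₀^τ g(v(σ)) dσ) with limit θ̄ = lim_{τ→∞} θ(τ), and define Φ : [0,1] → ℝ by Φ(θ) = −θ·g(θ·v₀ + (1 − θ)·p). Then Φ(θ̄) = 0; that is, the limit of the characteristic determining parameter is always a characteristic determining value (a zero of the vector field of the characteristic parametric determining form). -/

import Mathlib

open Set Filter Topology MeasureTheory intervalIntegral

/-
The quantity `θ` itself solves the scalar ODE `θ' = Φ(θ)`. Indeed `v - p` obeys the linear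
equation `u' = -g(v) u`, whose solution is `u(τ) = θ(τ) (v₀ - p)`, so `v(τ) = θ v₀ + (1 - θ) p`
and `θ' = -g(v) θ = Φ(θ)`. A convergent trajectory of an autonomous ODE with continuous vector
field ends at an equilibrium: by the mean value theorem, `Φ(θ(ξ))` for some `ξ ∈ (τ, τ + 1)`
equals `θ(τ + 1) - θ(τ) → 0`, while it also tends to `Φ(θ̄)`.
-/

section

variable {E : Type*} [NormedAddCommGroup E] [NormedSpace ℝ E]

theorem hasDerivWithinAt_integral_Ici [CompleteSpace E] {f : ℝ → E} {a τ : ℝ}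
    (hf : ContinuousOn f (Ici a)) (hτ : a ≤ τ) :
    HasDerivWithinAt (fun t => ∫ σ in a..t, f σ) (f τ) (Ici a) τ := by
  have hint : IntervalIntegrable f volume a τ :=
    (hf.mono (by rw [uIcc_of_le hτ]; exact Icc_subset_Ici_self)).intervalIntegrable
  rcases hτ.eq_or_lt with rfl | hτ
  · exact integral_hasDerivWithinAt_right hint
      ((hf.mono Ioi_subset_Ici_self).stronglyMeasurableAtFilter_nhdsWithin measurableSet_Ioi a)
      ((hf a self_mem_Ici).mono Ioi_subset_Ici_self)
  · exact (integral_hasDerivAt_right hint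
      ⟨Ici a, Ici_mem_nhds hτ, hf.aestronglyMeasurable measurableSet_Ici⟩
      (hf.continuousAt (Ici_mem_nhds hτ))).hasDerivWithinAt

theorem eq_exp_neg_integral_smul_of_hasDerivWithinAt {c : ℝ → ℝ} {u : ℝ → E} {a τ : ℝ}
    (hc : ContinuousOn c (Ici a))
    (hu : ∀ t ∈ Ici a, HasDerivWithinAt u (-(c t) • u t) (Ici a) t) (hτ : a ≤ τ) :
    u τ = Real.exp (-∫ σ in a..τ, c σ) • u a := by
  set C : ℝ → ℝ := fun t => ∫ σ in a..t, c σ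
  have hw : ∀ t ∈ Ici a,
      HasDerivWithinAt (fun t => Real.exp (C t) • u t) 0 (Ici a) t := by
    intro t ht
    exact ((hasDerivWithinAt_integral_Ici hc ht).exp.smul (hu t ht)).congr_deriv <| by
      rw [smul_smul, ← add_smul, mul_neg, neg_add_cancel, zero_smul]
  have hconst := (convex_Ici a).norm_image_sub_le_of_norm_hasDerivWithin_le hw
    (fun _ _ => norm_zero.le) self_mem_Ici hτ
  rw [zero_mul, norm_le_zero_iff, sub_eq_zero] at hconst
  rw [Real.exp_neg, eq_inv_smul_iff₀ (Real.exp_ne_zero _)]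
  simpa only [C, integral_same, Real.exp_zero, one_smul] using hconst

end

theorem eq_zero_of_tendsto_of_tendsto_deriv {f f' : ℝ → ℝ} {L l : ℝ}
    (hderiv : ∀ᶠ t in atTop, HasDerivAt f (f' t) t)
    (hf : Tendsto f atTop (𝓝 L)) (hf' : Tendsto f' atTop (𝓝 l)) : l = 0 := by
  obtain ⟨T, hT⟩ := eventually_atTop.1 hderiv
  have hmvt : ∀ t ∈ Ici T, ∃ ξ ∈ Ioo t (t + 1), f' ξ = f (t + 1) - f t := by
    intro t (ht : T ≤ t)
    obtain ⟨ξ, hξ, hslope⟩ := exists_hasDerivAt_eq_slope f f' (lt_add_one t)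
      (fun x hx => (hT x (ht.trans hx.1)).continuousAt.continuousWithinAt)
      (fun x hx => hT x (ht.trans hx.1.le))
    exact ⟨ξ, hξ, by rw [hslope, add_sub_cancel_left, div_one]⟩
  choose! ξ hξ hξ_slope using hmvt
  have hξ_tendsto : Tendsto ξ atTop atTop :=
    tendsto_atTop_mono' _ ((eventually_ge_atTop T).mono fun t ht => (hξ t ht).1.le) tendsto_id
  have hincr : Tendsto (fun t => f (t + 1) - f t) atTop (𝓝 0) := by
    have := (hf.comp (tendsto_atTop_add_const_right _ 1 tendsto_id)).sub hf
    rwa [sub_self] at this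
  exact tendsto_nhds_unique ((hf'.comp hξ_tendsto).congr'
    ((eventually_ge_atTop T).mono hξ_slope)) hincr

theorem apply_eq_zero_of_tendsto_of_hasDerivAt {f F : ℝ → ℝ} {L : ℝ} (hF : ContinuousAt F L)
    (hderiv : ∀ᶠ t in atTop, HasDerivAt f (F (f t)) t) (hf : Tendsto f atTop (𝓝 L)) :
    F L = 0 :=
  eq_zero_of_tendsto_of_tendsto_deriv hderiv hf (hF.tendsto.comp hf)

theorem limit_is_characteristic_determining_value_general
    {X : Type*} [NormedAddCommGroup X] [NormedSpace ℝ X]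
    (g : X → ℝ) (hg_cont : Continuous g)
    (p v₀ : X) (v : ℝ → X) (hv0 : v 0 = v₀)
    (hv' : ∀ τ ∈ Set.Ici (0:ℝ),
      HasDerivWithinAt v ((-(g (v τ))) • (v τ - p)) (Set.Ici 0) τ)
    (θ : ℝ → ℝ)
    (hθ : ∀ τ, θ τ = Real.exp (-(∫ σ in (0:ℝ)..τ, g (v σ))))
    (θbar : ℝ) (hlim : Filter.Tendsto θ Filter.atTop (nhds θbar))
    (Φ : ℝ → ℝ)
    (hΦ : ∀ t, Φ t = -(t * g (t • v₀ + (1 - t) • p))) :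
    Φ θbar = 0 := by
  have hgv : ContinuousOn (fun σ => g (v σ)) (Ici 0) :=
    hg_cont.comp_continuousOn fun τ hτ => (hv' τ hτ).continuousWithinAt
  have hsol : ∀ τ ∈ Ici (0:ℝ), v τ = θ τ • v₀ + (1 - θ τ) • p := by
    intro τ hτ
    have hlin := eq_exp_neg_integral_smul_of_hasDerivWithinAt hgv
      (fun t ht => (hv' t ht).sub_const p) hτ
    rw [← hθ, hv0, sub_eq_iff_eq_add] at hlin
    rw [hlin, smul_sub, sub_smul, one_smul]
    abel
  have hθ' : ∀ τ ∈ Ioi (0:ℝ), HasDerivAt θ (Φ (θ τ)) τ := by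
    intro τ (hτ : 0 < τ)
    have hG := (hasDerivWithinAt_integral_Ici hgv hτ.le).hasDerivAt (Ici_mem_nhds hτ)
    rw [hΦ, ← hsol τ hτ.le, hθ τ, funext hθ, ← mul_neg]
    exact hG.neg.exp
  have hΦ_cont : Continuous Φ := by
    rw [funext hΦ]
    fun_prop
  exact apply_eq_zero_of_tendsto_of_hasDerivAt hΦ_cont.continuousAt
    (eventually_gt_atTop 0 |>.mono hθ') hlim

/-- For a solution of the abstract determining form `dv/dτ = -g(v)(v - p)` with
characteristic determining parameter `θ(τ) = exp(-∫₀^τ g(v(σ)) dσ)` having limit `θ̄`,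
and `Φ(θ) = -θ·g(θ·v₀ + (1-θ)·p)` the vector field of the characteristic parametric
determining form, one has `Φ(θ̄) = 0`: the limit is a characteristic determining value. -/
theorem limit_is_characteristic_determining_value
    {X : Type*} [NormedAddCommGroup X] [NormedSpace ℝ X] [CompleteSpace X]
    (g : X → ℝ) (hg_cont : Continuous g) (hg_nonneg : ∀ x, 0 ≤ g x)
    (p v₀ : X) (v : ℝ → X) (hv0 : v 0 = v₀)
    (hv' : ∀ τ ∈ Set.Ici (0:ℝ),
      HasDerivWithinAt v ((-(g (v τ))) • (v τ - p)) (Set.Ici 0) τ)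
    (θ : ℝ → ℝ)
    (hθ : ∀ τ, θ τ = Real.exp (-(∫ σ in (0:ℝ)..τ, g (v σ))))
    (θbar : ℝ) (hlim : Filter.Tendsto θ Filter.atTop (nhds θbar))
    (Φ : ℝ → ℝ)
    (hΦ : ∀ t, Φ t = -(t * g (t • v₀ + (1 - t) • p))) :
    Φ θbar = 0 :=
  limit_is_characteristic_determining_value_general g hg_cont p v₀ v hv0 hv' θ hθ θbar hlim Φ hΦ
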